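/- arXiv:2603.19528 — 4 statements merged into one kernel-verified Lean document; each statement's English description precedes it below -/
import Mathlib

section
/- Let (a_n)_{n≥0} be a complex sequence converging to 0. Suppose the linear subspace K of c_0(ℤ_{≥0}) spanned by all shifted sequences (a_{n+m})_{n≥0}, m ∈ ℤ_{≥0}, is finite dimensional. Then there exist k ∈ ℕ, a matrix B ∈ M_k(ℂ), and vectors λ, γ ∈ ℂ^k such that a_n = ᵗλ B^n γ for all n ∈ ℤ_{≥0}. -/
/-!
The shift maps the span `K` of the shifts of `a` into itself, and `a n` is the value at `0` of
the `n`-th shift of `a`. In a basis of `K` this reads `a n = ᵗλ Bⁿ γ`, with `B` the matrix of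
the shift on `K`, `γ` the coordinates of `a` and `λ` the values at `0` of the basis vectors.
-/

open Matrix Module Set

theorem Module.Basis.apply_pow_apply_eq_dotProduct {R M ι : Type*} [CommSemiring R]
    [AddCommMonoid M] [Module R M] [Fintype ι] [DecidableEq ι] (b : Basis ι R M)
    (f : Module.End R M) (φ : M →ₗ[R] R) (x : M) (n : ℕ) :
    φ ((f ^ n) x) = (fun i => φ (b i)) ⬝ᵥ (LinearMap.toMatrix b b f ^ n *ᵥ b.repr x) := by
  rw [LinearMap.toMatrix_pow, LinearMap.toMatrix_mulVec_repr]
  calc φ ((f ^ n) x) = φ (∑ i, b.repr ((f ^ n) x) i • b i) := by rw [b.sum_repr]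
    _ = _ := by simp only [map_sum, map_smul, smul_eq_mul, dotProduct, mul_comm]

theorem Module.End.mapsTo_span_range_pow_apply {R M : Type*} [Semiring R] [AddCommMonoid M]
    [Module R M] (f : Module.End R M) (v : M) :
    MapsTo f (Submodule.span R (range fun m : ℕ => (f ^ m) v))
      (Submodule.span R (range fun m : ℕ => (f ^ m) v)) :=
  Submodule.mapsTo_span <| by
    rintro _ ⟨m, rfl⟩
    exact ⟨m + 1, by simp only [pow_succ', Module.End.mul_apply]⟩

theorem Module.End.exists_matrix_of_finiteDimensional_span_range_pow_apply {K V : Type*}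
    [Field K] [AddCommGroup V] [Module K V] (f : Module.End K V) (φ : V →ₗ[K] K) (v : V)
    [FiniteDimensional K (Submodule.span K (range fun m : ℕ => (f ^ m) v))] :
    ∃ (k : ℕ) (B : Matrix (Fin k) (Fin k) K) (l g : Fin k → K),
      ∀ n : ℕ, φ ((f ^ n) v) = l ⬝ᵥ (B ^ n *ᵥ g) := by
  set W := Submodule.span K (range fun m : ℕ => (f ^ m) v)
  have hfW : ∀ x ∈ W, f x ∈ W := f.mapsTo_span_range_pow_apply v
  let vW : W := ⟨v, Submodule.subset_span ⟨0, by simp only [pow_zero, Module.End.one_apply]⟩⟩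
  let b := Module.finBasis K W
  refine ⟨finrank K W, LinearMap.toMatrix b b (f.restrict hfW), fun i => φ (b i), b.repr vW,
    fun n => ?_⟩
  have key := b.apply_pow_apply_eq_dotProduct (f.restrict hfW) (φ.comp W.subtype) vW n
  rwa [Module.End.pow_restrict] at key

theorem LinearMap.funLeft_succ_pow_apply {R M : Type*} [Semiring R] [AddCommMonoid M]
    [Module R M] (a : ℕ → M) (m n : ℕ) :
    ((LinearMap.funLeft R M Nat.succ ^ m) a) n = a (n + m) := by
  induction m generalizing n with
  | zero => rfl
  | succ m ih =>
    rw [pow_succ', Module.End.mul_apply, LinearMap.funLeft_apply, ih, Nat.succ_add]; rfl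

theorem stmt0_general (a : ℕ → ℂ)
    (hfin : FiniteDimensional ℂ
      (Submodule.span ℂ {x : ℕ → ℂ | ∃ m : ℕ, x = fun n => a (n + m)})) :
    ∃ (k : ℕ) (B : Matrix (Fin k) (Fin k) ℂ) (l g : Fin k → ℂ),
      ∀ n : ℕ, a n = dotProduct l ((B ^ n).mulVec g) := by
  let shift := LinearMap.funLeft ℂ ℂ Nat.succ
  have hshifts :
      {x : ℕ → ℂ | ∃ m : ℕ, x = fun n => a (n + m)} = range fun m => (shift ^ m) a := by
    ext x
    refine exists_congr fun m => ?_
    rw [eq_comm, funext_iff, funext_iff]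
    simp only [shift, LinearMap.funLeft_succ_pow_apply]
  rw [hshifts] at hfin
  obtain ⟨k, B, l, g, h⟩ :=
    Module.End.exists_matrix_of_finiteDimensional_span_range_pow_apply shift (LinearMap.proj 0) a
  refine ⟨k, B, l, g, fun n => ?_⟩
  rw [← h n, LinearMap.proj_apply, LinearMap.funLeft_succ_pow_apply, zero_add]

/-- If `a : ℕ → ℂ` tends to 0 and the span of its shifts is finite
dimensional, then `a n = ᵗλ Bⁿ γ` for some matrix `B` and vectors `λ, γ`. -/
theorem stmt0 (a : ℕ → ℂ)
    (ha : Filter.Tendsto a Filter.atTop (nhds 0))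
    (hfin : FiniteDimensional ℂ
      (Submodule.span ℂ {x : ℕ → ℂ | ∃ m : ℕ, x = fun n => a (n + m)})) :
    ∃ (k : ℕ) (B : Matrix (Fin k) (Fin k) ℂ) (l g : Fin k → ℂ),
      ∀ n : ℕ, a n = dotProduct l ((B ^ n).mulVec g) :=
  stmt0_general a hfin
end

section
/- Let (a_n)_{n≥0} be a complex sequence converging to 0 such that the linear span of all its shifts (a_{n+m})_{n≥0} for m ∈ ℤ_{≥0} is finite dimensional. Then (a_n) decays exponentially: there exist M > 0 and 0 < A < 1 such that |a_n| ≤ M·Aⁿ for all n ∈ ℤ_{≥0}. -/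
/-!
Realise `a` as an element of `c₀ = C₀(ℕ, ℂ)`, on which the shift `S` satisfies `‖Sⁿ f‖ → 0` for
every `f`. On the finite-dimensional `S`-invariant span `V` of the orbit of `a`, this pointwise
convergence upgrades to convergence in operator norm, so `‖(S|_V)ᴺ‖ < 1` for some `N ≥ 1`, and
submultiplicativity of the operator norm turns this into `‖(S|_V)ⁿ‖ ≤ C Aⁿ` with `A < 1`.
Finally `|aₙ| = |(Sⁿ a)(0)| ≤ ‖Sⁿ a‖`.
-/

open Filter Topology ZeroAtInfty

section NormedRing

variable {R : Type*} [SeminormedRing R]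

theorem norm_pow_mul_add_le (x : R) (N q r : ℕ) :
    ‖x ^ (N * q + r)‖ ≤ ‖x ^ N‖ ^ q * ‖x ^ r‖ := by
  induction q with
  | zero => simp
  | succ q ih =>
    calc ‖x ^ (N * (q + 1) + r)‖ = ‖x ^ N * x ^ (N * q + r)‖ := by rw [← pow_add]; ring_nf
      _ ≤ ‖x ^ N‖ * ‖x ^ (N * q + r)‖ := norm_mul_le _ _
      _ ≤ ‖x ^ N‖ * (‖x ^ N‖ ^ q * ‖x ^ r‖) := by gcongr
      _ = ‖x ^ N‖ ^ (q + 1) * ‖x ^ r‖ := by ring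

theorem exists_norm_pow_le_mul_pow_of_norm_pow_lt_one {x : R} {N : ℕ} (hN : N ≠ 0)
    (hx : ‖x ^ N‖ < 1) : ∃ C > 0, ∃ A : ℝ, 0 < A ∧ A < 1 ∧ ∀ n, ‖x ^ n‖ ≤ C * A ^ n := by
  -- `c` is kept away from `0` so that its `N`-th root `A` is positive.
  set c := max ‖x ^ N‖ (1 / 2)
  have hc0 : 0 < c := lt_max_of_lt_right (by norm_num)
  have hc1 : c < 1 := max_lt hx (by norm_num)
  set A := c ^ (N⁻¹ : ℝ)
  have hA0 : 0 < A := Real.rpow_pos_of_pos hc0 _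
  have hA1 : A < 1 := Real.rpow_lt_one hc0.le hc1 (by positivity)
  have hAN : A ^ N = c := Real.rpow_inv_natCast_pow hc0.le hN
  set K := ∑ r ∈ Finset.range N, ‖x ^ r‖
  refine ⟨(K + 1) / A ^ N, by positivity, A, hA0, hA1, fun n => ?_⟩
  obtain ⟨q, r, hr, rfl⟩ : ∃ q r, r < N ∧ n = N * q + r :=
    ⟨n / N, n % N, Nat.mod_lt _ (Nat.pos_of_ne_zero hN), (Nat.div_add_mod n N).symm⟩
  have hK : ‖x ^ r‖ ≤ K + 1 := by
    have := Finset.single_le_sum (fun i _ => norm_nonneg (x ^ i)) (Finset.mem_range.2 hr)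
    linarith
  calc ‖x ^ (N * q + r)‖ ≤ ‖x ^ N‖ ^ q * ‖x ^ r‖ := norm_pow_mul_add_le x N q r
    _ ≤ A ^ (N * q) * (K + 1) := by
        rw [pow_mul, hAN]
        gcongr
        exact le_max_left _ _
    _ = (K + 1) / A ^ N * A ^ (N * q + N) := by
        rw [pow_add]; field_simp
    _ ≤ (K + 1) / A ^ N * A ^ (N * q + r) := by
        gcongr _ * ?_
        exact pow_le_pow_of_le_one hA0.le hA1.le (by omega)

end NormedRing

section FiniteDimensional

variable {𝕜 : Type*} [NontriviallyNormedField 𝕜] [CompleteSpace 𝕜]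
  {E : Type*} [NormedAddCommGroup E] [NormedSpace 𝕜 E] [FiniteDimensional 𝕜 E]
  {F : Type*} [NormedAddCommGroup F] [NormedSpace 𝕜 F]

theorem tendsto_clm_apply {ι : Type*} {l : Filter ι} {f : ι → E →L[𝕜] F} {g : E →L[𝕜] F} :
    Tendsto f l (𝓝 g) ↔ ∀ y, Tendsto (f · y) l (𝓝 (g y)) := by
  refine ⟨fun h y => ((ContinuousLinearMap.apply 𝕜 F y).continuous.tendsto g).comp h,
    fun h => ?_⟩
  let e : (E →L[𝕜] F) ≃L[𝕜] Fin (Module.finrank 𝕜 E) → F :=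
    ((ContinuousLinearEquiv.ofFinrankEq (Module.finrank_fin_fun 𝕜).symm).arrowCongr
      (1 : F ≃L[𝕜] F)).trans (ContinuousLinearEquiv.piRing _)
  rw [e.toHomeomorph.isInducing.tendsto_nhds_iff]
  exact tendsto_pi_nhds.mpr fun i => h _

theorem LinearMap.exists_norm_pow_apply_le_of_tendsto (T : E →ₗ[𝕜] E)
    (hT : ∀ x, Tendsto (fun n => (T ^ n) x) atTop (𝓝 0)) :
    ∃ C > 0, ∃ A : ℝ, 0 < A ∧ A < 1 ∧ ∀ n x, ‖(T ^ n) x‖ ≤ C * A ^ n * ‖x‖ := by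
  set T' := Module.End.toContinuousLinearMap E T
  have hpow : ∀ n y, (T' ^ n) y = (T ^ n) y := fun n y => by rw [← map_pow]; rfl
  have hnorm : Tendsto (fun n => ‖T' ^ n‖) atTop (𝓝 0) := by
    rw [← tendsto_zero_iff_norm_tendsto_zero, tendsto_clm_apply]
    simp only [hpow]
    exact hT
  obtain ⟨N, hN, hN0⟩ :=
    ((hnorm.eventually (gt_mem_nhds one_pos)).and (eventually_ne_atTop 0)).exists
  obtain ⟨C, hC, A, hA0, hA1, hCA⟩ := exists_norm_pow_le_mul_pow_of_norm_pow_lt_one hN0 hN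
  refine ⟨C, hC, A, hA0, hA1, fun n x => ?_⟩
  calc ‖(T ^ n) x‖ = ‖(T' ^ n) x‖ := by rw [hpow]
    _ ≤ ‖T' ^ n‖ * ‖x‖ := (T' ^ n).le_opNorm x
    _ ≤ C * A ^ n * ‖x‖ := by gcongr; exact hCA n

end FiniteDimensional

theorem Module.End.apply_mem_span_range_pow_apply {R M : Type*} [Semiring R] [AddCommMonoid M]
    [Module R M] (f : Module.End R M) (x : M) :
    ∀ v ∈ Submodule.span R (Set.range fun m => (f ^ m) x),
      f v ∈ Submodule.span R (Set.range fun m => (f ^ m) x) := fun v hv => by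
  refine (Submodule.span_le (p := (Submodule.span R _).comap f)).2 ?_ hv
  rintro _ ⟨m, rfl⟩
  exact Submodule.subset_span ⟨m + 1, by simp only [pow_succ', Module.End.mul_apply]⟩

namespace ZeroAtInftyContinuousMap

section Shift

variable (R : Type*) {E : Type*} [Semiring R] [SeminormedAddCommGroup E] [Module R E]
  [ContinuousConstSMul R E]

def shift : C₀(ℕ, E) →ₗ[R] C₀(ℕ, E) :=
  compLinearMap ⟨⟨(· + 1), continuous_of_discreteTopology⟩,
    by simpa only [cocompact_eq_atTop] using tendsto_add_atTop_nat 1⟩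

variable {R}

theorem shift_pow_apply (f : C₀(ℕ, E)) (n k : ℕ) : (shift R ^ n) f k = f (k + n) := by
  induction n generalizing k with
  | zero => rfl
  | succ n ih =>
    rw [pow_succ', Module.End.mul_apply]
    exact (ih (k + 1)).trans (by rw [add_right_comm, add_assoc])

theorem tendsto_shift_pow (f : C₀(ℕ, E)) :
    Tendsto (fun n => (shift R ^ n) f) atTop (𝓝 0) := by
  rw [tendsto_iff_tendstoUniformly, Metric.tendstoUniformly_iff]
  intro ε hε
  have hf : Tendsto f atTop (𝓝 0) := cocompact_eq_atTop (α := ℕ) ▸ zero_at_infty f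
  obtain ⟨N, hN⟩ := Metric.tendsto_atTop.1 hf ε hε
  filter_upwards [eventually_ge_atTop N] with n hn k
  rw [shift_pow_apply, coe_zero, Pi.zero_apply, dist_comm]
  exact hN _ (by omega)

end Shift

theorem exists_norm_apply_le_of_finiteDimensional_span_shift_pow {𝕜 : Type*}
    [NontriviallyNormedField 𝕜] [CompleteSpace 𝕜] {E : Type*} [NormedAddCommGroup E]
    [NormedSpace 𝕜 E] (f : C₀(ℕ, E))
    [FiniteDimensional 𝕜 (Submodule.span 𝕜 (Set.range fun m => (shift 𝕜 ^ m) f))] :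
    ∃ C > 0, ∃ A : ℝ, 0 < A ∧ A < 1 ∧ ∀ n, ‖f n‖ ≤ C * A ^ n := by
  set S : Module.End 𝕜 C₀(ℕ, E) := shift 𝕜
  set V := Submodule.span 𝕜 (Set.range fun m => (S ^ m) f)
  have hV := S.apply_mem_span_range_pow_apply f
  have hpow : ∀ n (v : V), ((S.restrict hV ^ n) v : C₀(ℕ, E)) = (S ^ n) v := fun n v => by
    rw [Module.End.pow_restrict, LinearMap.restrict_apply]
  obtain ⟨C, hC, A, hA0, hA1, hCA⟩ :=
    (S.restrict hV).exists_norm_pow_apply_le_of_tendsto (𝕜 := 𝕜) (E := V) fun v =>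
      tendsto_subtype_rng.2 <| (tendsto_shift_pow (v : C₀(ℕ, E))).congr fun n => (hpow n v).symm
  have hf : f ∈ V := Submodule.subset_span ⟨0, rfl⟩
  refine ⟨C * ‖f‖ + 1, by positivity, A, hA0, hA1, fun n => ?_⟩
  calc ‖f n‖ = ‖(S ^ n) f 0‖ := by rw [shift_pow_apply, zero_add]
    _ ≤ ‖(S ^ n) f‖ := ((S ^ n) f).toBCF.norm_coe_le_norm 0
    _ = ‖(S.restrict hV ^ n) ⟨f, hf⟩‖ := congrArg norm (hpow n ⟨f, hf⟩).symm
    _ ≤ C * A ^ n * ‖f‖ := hCA n _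
    _ ≤ (C * ‖f‖ + 1) * A ^ n := by nlinarith [pow_pos hA0 n]

end ZeroAtInftyContinuousMap

/-- If `a : ℕ → ℂ` tends to 0 and the span of its shifts is finite
dimensional, then `a` decays exponentially. -/
theorem stmt1 (a : ℕ → ℂ)
    (ha : Filter.Tendsto a Filter.atTop (nhds 0))
    (hfin : FiniteDimensional ℂ
      (Submodule.span ℂ {x : ℕ → ℂ | ∃ m : ℕ, x = fun n => a (n + m)})) :
    ∃ M : ℝ, 0 < M ∧ ∃ A : ℝ, 0 < A ∧ A < 1 ∧
      ∀ n : ℕ, ‖a n‖ ≤ M * A ^ n := by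
  let a₀ : C₀(ℕ, ℂ) := ⟨⟨a, continuous_of_discreteTopology⟩, cocompact_eq_atTop (α := ℕ) ▸ ha⟩
  let coeFn : C₀(ℕ, ℂ) →ₗ[ℂ] ℕ → ℂ :=
    { toFun := (⇑), map_add' := fun _ _ => rfl, map_smul' := fun _ _ => rfl }
  set V := Submodule.span ℂ (Set.range fun m => (ZeroAtInftyContinuousMap.shift ℂ ^ m) a₀)
  have hmap : V.map coeFn = Submodule.span ℂ {x : ℕ → ℂ | ∃ m : ℕ, x = fun n => a (n + m)} := by
    rw [Submodule.map_span, ← Set.range_comp]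
    congr 1
    ext x
    simp [coeFn, eq_comm, funext_iff, ZeroAtInftyContinuousMap.shift_pow_apply, a₀]
  have : FiniteDimensional ℂ (V.map coeFn) := hmap ▸ hfin
  have : FiniteDimensional ℂ V :=
    (Submodule.equivMapOfInjective coeFn DFunLike.coe_injective V).symm.finiteDimensional
  exact ZeroAtInftyContinuousMap.exists_norm_apply_le_of_finiteDimensional_span_shift_pow (𝕜 := ℂ) a₀
end

section
/- Let k ∈ ℕ, B ∈ M_k(ℂ), λ, γ ∈ ℂ^k, and set a_n = ᵗλ B^n γ. Suppose ᵗλ ℂ[B] = ℂ^k (as row vectors) and ℂ[B] γ = ℂ^k (as column vectors), where ℂ[B] denotes the algebra of polynomials in B. If a_n → 0 as n → ∞, then every eigenvalue of B has absolute value strictly less than 1. -/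
/-!
The vectors `v` with `ᵗλ Bⁿ v → 0` form a `B`-invariant subspace containing `γ`, hence all of
`ℂᵏ` by cyclicity of `γ`. Transposing, the row vectors `w` with `w Bⁿ v → 0` form a
`Bᵀ`-invariant subspace containing `ᵗλ`, hence all rows by cyclicity of `ᵗλ`. So `Bⁿ → 0`, and
an eigenvector `v` for `μ` gives `μⁿ v = Bⁿ v → 0`, i.e. `|μ| < 1`.
-/

open Polynomial Filter Topology Matrix

namespace Module.End

variable {R M N : Type*} [CommSemiring R] [AddCommMonoid M] [Module R M] [AddCommMonoid N]
  [Module R N] [TopologicalSpace N] [ContinuousAdd N] [ContinuousConstSMul R N]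

def tendstoZeroSubmodule (T : Module.End R M) (φ : M →ₗ[R] N) : Submodule R M where
  carrier := {x | Tendsto (fun n ↦ φ ((T ^ n) x)) atTop (𝓝 0)}
  add_mem' hx hy := by simpa using hx.add hy
  zero_mem' := by simpa using tendsto_const_nhds
  smul_mem' c x hx := by simpa using hx.const_smul c

@[simp]
theorem mem_tendstoZeroSubmodule {T : Module.End R M} {φ : M →ₗ[R] N} {x : M} :
    x ∈ T.tendstoZeroSubmodule φ ↔ Tendsto (fun n ↦ φ ((T ^ n) x)) atTop (𝓝 0) :=
  Iff.rfl

theorem tendstoZeroSubmodule_le_comap (T : Module.End R M) (φ : M →ₗ[R] N) :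
    T.tendstoZeroSubmodule φ ≤ (T.tendstoZeroSubmodule φ).comap T := fun x hx ↦ by
  simpa only [Submodule.mem_comap, mem_tendstoZeroSubmodule, Function.comp_def, pow_succ,
    mul_apply] using (mem_tendstoZeroSubmodule.mp hx).comp (tendsto_add_atTop_nat 1)

theorem tendsto_apply_pow_apply_of_span_aeval_eq_top {T : Module.End R M} {φ : M →ₗ[R] N}
    {x₀ : M} (hspan : Submodule.span R {x | ∃ q : R[X], x = aeval T q x₀} = ⊤)
    (h : Tendsto (fun n ↦ φ ((T ^ n) x₀)) atTop (𝓝 0)) (x : M) :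
    Tendsto (fun n ↦ φ ((T ^ n) x)) atTop (𝓝 0) := by
  suffices ⊤ ≤ T.tendstoZeroSubmodule φ from this Submodule.mem_top
  rw [← hspan, Submodule.span_le]
  rintro _ ⟨q, rfl⟩
  exact aeval_apply_smul_mem_of_le_comap h q T (tendstoZeroSubmodule_le_comap T φ)

end Module.End

theorem Module.End.HasEigenvalue.norm_lt_one_of_tendsto_pow_apply {𝕜 E : Type*}
    [NontriviallyNormedField 𝕜] [NormedAddCommGroup E] [NormedSpace 𝕜 E] {T : Module.End 𝕜 E}
    {μ : 𝕜} (hμ : T.HasEigenvalue μ) (h : ∀ x, Tendsto (fun n ↦ (T ^ n) x) atTop (𝓝 0)) :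
    ‖μ‖ < 1 := by
  obtain ⟨x, hx⟩ := hμ.exists_hasEigenvector
  have hxpos : 0 < ‖x‖ := norm_pos_iff.mpr hx.2
  have hnorm : Tendsto (fun n ↦ ‖μ‖ ^ n * ‖x‖) atTop (𝓝 0) := by
    simpa [hx.pow_apply, norm_smul] using (h x).norm
  have := hnorm.mul_const ‖x‖⁻¹
  simp only [zero_mul, mul_inv_cancel_right₀ hxpos.ne'] at this
  simpa using tendsto_pow_atTop_nhds_zero_iff.mp this

namespace Matrix

variable {n R : Type*} [Fintype n] [DecidableEq n] [CommSemiring R]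

theorem transpose_aeval (B : Matrix n n R) (q : R[X]) : (aeval B q)ᵀ = aeval Bᵀ q := by
  induction q using Polynomial.induction_on' with
  | add p q hp hq => simp [hp, hq]
  | monomial i a => simp [transpose_pow, Algebra.algebraMap_eq_smul_one]

theorem aeval_toLin'_apply (B : Matrix n n R) (q : R[X]) (v : n → R) :
    aeval (toLin' B) q v = aeval B q *ᵥ v := by
  rw [← toLinAlgEquiv'_apply, ← aeval_algHom_apply]
  rfl

variable [TopologicalSpace R] [IsTopologicalSemiring R]

theorem tendsto_dotProduct_pow_mulVec_of_span_eq_top {B : Matrix n n R} {l g : n → R}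
    (hg : Submodule.span R {v | ∃ q : R[X], v = aeval B q *ᵥ g} = ⊤)
    (ha : Tendsto (fun m : ℕ ↦ l ⬝ᵥ (B ^ m *ᵥ g)) atTop (𝓝 0)) (v : n → R) :
    Tendsto (fun m : ℕ ↦ l ⬝ᵥ (B ^ m *ᵥ v)) atTop (𝓝 0) := by
  simp_rw [← aeval_toLin'_apply] at hg
  simpa [← toLin'_pow] using
    Module.End.tendsto_apply_pow_apply_of_span_aeval_eq_top (φ := dotProductEquiv R n l) hg
      (by simpa [← toLin'_pow] using ha) v

theorem tendsto_pow_mulVec_of_span_eq_top {B : Matrix n n R} {l g : n → R}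
    (hl : Submodule.span R {w | ∃ q : R[X], w = l ᵥ* aeval B q} = ⊤)
    (hg : Submodule.span R {v | ∃ q : R[X], v = aeval B q *ᵥ g} = ⊤)
    (ha : Tendsto (fun m : ℕ ↦ l ⬝ᵥ (B ^ m *ᵥ g)) atTop (𝓝 0)) (v : n → R) :
    Tendsto (fun m : ℕ ↦ B ^ m *ᵥ v) atTop (𝓝 0) := by
  have hl_transpose : Submodule.span R {w | ∃ q : R[X], w = aeval Bᵀ q *ᵥ l} = ⊤ := by
    simpa only [← transpose_aeval, mulVec_transpose] using hl
  have hswap (w u : n → R) (m : ℕ) : w ⬝ᵥ (B ^ m *ᵥ u) = u ⬝ᵥ (Bᵀ ^ m *ᵥ w) := by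
    rw [← transpose_pow, dotProduct_transpose_mulVec]
  have hcol := tendsto_dotProduct_pow_mulVec_of_span_eq_top hg ha v
  have hrow (w : n → R) : Tendsto (fun m : ℕ ↦ w ⬝ᵥ (B ^ m *ᵥ v)) atTop (𝓝 0) := by
    simp only [hswap] at hcol ⊢
    exact tendsto_dotProduct_pow_mulVec_of_span_eq_top hl_transpose hcol w
  exact tendsto_pi_nhds.2 fun i ↦ by simpa [single_one_dotProduct] using hrow (Pi.single i 1)

end Matrix

/-- cyclicity of row vector `l` and column vector `g` under `ℂ[B]`,
plus `ᵗl Bⁿ g → 0`, forces all eigenvalues of `B` to lie in the open unit disk. -/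
theorem stmt2 (k : ℕ) (B : Matrix (Fin k) (Fin k) ℂ) (l g : Fin k → ℂ)
    (hl : Submodule.span ℂ
      {v : Fin k → ℂ | ∃ q : Polynomial ℂ, v = Matrix.vecMul l (Polynomial.aeval B q)} = ⊤)
    (hg : Submodule.span ℂ
      {v : Fin k → ℂ | ∃ q : Polynomial ℂ, v = (Polynomial.aeval B q).mulVec g} = ⊤)
    (ha : Filter.Tendsto (fun n : ℕ => dotProduct l ((B ^ n).mulVec g))
      Filter.atTop (nhds 0)) :
    ∀ μ ∈ spectrum ℂ B, ‖μ‖ < 1 := by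
  intro μ hμ
  have hμ' : Module.End.HasEigenvalue (toLin' B) μ := by
    rwa [Module.End.hasEigenvalue_iff_mem_spectrum, spectrum_toLin']
  refine hμ'.norm_lt_one_of_tendsto_pow_apply fun v ↦ ?_
  simpa only [← toLin'_pow, toLin'_apply] using tendsto_pow_mulVec_of_span_eq_top hl hg ha v
end

section
/- Let k ∈ ℕ, λ ∈ ℂ with |λ| ≠ 1, and let M ∈ M_k(ℂ) be the matrix with M_{ij} = |λ|² for i < j and M_{ij} = 1 for i ≥ j. Then the characteristic polynomial of M equals ((x − 1 + |λ|²)^k − |λ|² x^k)/(1 − |λ|²), the eigenvalues of M are (|λ|² − 1)/(|λ|^{2/k} exp(2πl√(−1)/k) − 1) for l = 0,...,k−1, and the spectral radius of M is (|λ|² − 1)/(|λ|^{2/k} − 1). -/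
/-!
Write `a = |λ|²` and let `Z` be the `a`-twisted cyclic shift `e_j ↦ e_{j+1}`, `e_{k-1} ↦ a e_0`,
the companion matrix of `X^k - a`. A telescoping computation gives `M (1 - Z) = (1 - a) I`, hence
`(x I - M)(1 - Z) = (x + a - 1) I - x Z`; taking determinants with `det (y I - x Z) = y^k - a x^k`
yields the characteristic polynomial. Its roots `μ` satisfy `(μ + a - 1)^k = a μ^k`, that is
`μ = (a - 1)/(ω - 1)` with `ω^k = a`, so `ω = w ζ` with `w = a^{1/k}` and `ζ` a `k`-th root of
unity. Since `|w ζ - 1| ≥ |w - 1|`, the eigenvalue of largest modulus is the one for `ζ = 1`.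
-/

open Polynomial Matrix

section CommRing

variable {R : Type*} [CommRing R]

def stepMatrix (a : R) (k : ℕ) : Matrix (Fin k) (Fin k) R :=
  of fun i j => if i < j then a else 1

/-- The companion matrix of `X ^ (n + 1) - a`. -/
def twistedShift (a : R) (n : ℕ) : Matrix (Fin (n + 1)) (Fin (n + 1)) R :=
  of fun i j => if (i : ℕ) = j + 1 then 1 else if (i : ℕ) = 0 ∧ (j : ℕ) = n then a else 0

lemma twistedShift_apply_eq_ite (a : R) (n : ℕ) (i j : Fin (n + 1)) :
    twistedShift a n i j = if i = finRotate _ j then (if j = Fin.last n then a else 1) else 0 := by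
  simp only [twistedShift, of_apply, Fin.ext_iff, coe_finRotate, Fin.val_last]
  split_ifs <;> first | rfl | omega

lemma stepMatrix_mul_one_sub_twistedShift (a : R) (n : ℕ) :
    stepMatrix a (n + 1) * (1 - twistedShift a n) = (1 - a) • 1 := by
  rw [Matrix.mul_sub, Matrix.mul_one]
  ext i j
  simp only [Matrix.sub_apply, Matrix.smul_apply, mul_apply, twistedShift_apply_eq_ite, mul_ite,
    mul_zero, Finset.sum_ite_eq', Finset.mem_univ, if_true, stepMatrix, of_apply, one_apply,
    smul_eq_mul]
  by_cases hj : j = Fin.last n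
  · simp only [hj, finRotate_last, if_true, Fin.not_lt_zero, if_false]
    grind
  · have hrot : ((finRotate _ j : Fin (n + 1)) : ℕ) = j + 1 := coe_finRotate_of_ne_last hj
    grind

lemma det_smul_one_sub_smul_twistedShift (a x y : R) (n : ℕ) :
    det (y • 1 - x • twistedShift a n) = y ^ (n + 1) - a * x ^ (n + 1) := by
  -- Along row 0 only the entries `(0, 0)` and `(0, n)` survive, and both minors are triangular.
  set A := y • 1 - x • twistedShift a n with hA
  have hentry : ∀ i j, A i j = (if i = j then y else 0) - x * twistedShift a n i j := by
    intro i j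
    simp [hA, one_apply]
  have hrow : ∀ j, A 0 j = (if j = 0 then y else 0) - (if j = Fin.last n then a * x else 0) := by
    intro j
    simp only [hentry, twistedShift, of_apply, Fin.ext_iff, Fin.val_zero, Fin.val_last]
    grind
  have hminor₀ : det (A.submatrix Fin.succ Fin.succ) = y ^ n := by
    rw [det_of_isLowerTriangular]
    · simp [hentry, twistedShift]
    · intro i j hij
      rw [OrderDual.toDual_lt_toDual] at hij
      simp only [submatrix_apply, hentry, twistedShift, of_apply, Fin.val_succ]
      grind
  have hminorLast : det (A.submatrix Fin.succ Fin.castSucc) = (-x) ^ n := by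
    rw [det_of_isUpperTriangular]
    · simp only [submatrix_apply, hentry, twistedShift, of_apply, Fin.val_succ, Fin.val_castSucc]
      simp [Fin.ext_iff]
    · intro i j hij
      simp only [submatrix_apply, hentry, twistedShift, of_apply, Fin.val_succ, Fin.val_castSucc]
      grind
  rw [det_succ_row_zero]
  simp only [hrow, mul_sub, sub_mul, ite_mul, mul_ite, mul_zero, zero_mul, Finset.sum_sub_distrib,
    Finset.sum_ite_eq', Finset.mem_univ, if_true, Fin.succAbove_zero, Fin.succAbove_last, hminor₀,
    hminorLast, Fin.val_zero, Fin.val_last]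
  have hsign : (-1 : R) ^ n * (-x) ^ n = x ^ n := by rw [← mul_pow]; ring
  linear_combination -(a * x) * hsign

section Map

variable {S : Type*} [CommRing S]

lemma stepMatrix_map (f : R →+* S) (a : R) (k : ℕ) :
    (stepMatrix a k).map f = stepMatrix (f a) k := by
  ext i j
  simp only [stepMatrix, map_apply, of_apply, apply_ite f, map_one]

lemma twistedShift_map (f : R →+* S) (a : R) (n : ℕ) :
    (twistedShift a n).map f = twistedShift (f a) n := by
  ext i j
  simp only [twistedShift, map_apply, of_apply, apply_ite f, map_one, map_zero]

end Map

theorem charpoly_stepMatrix (a : R) (k : ℕ) :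
    (1 - a) • (stepMatrix a k).charpoly = (X + C (a - 1)) ^ k - a • X ^ k := by
  rcases k with _ | n
  · simp [charpoly, sub_smul]
  set Z := twistedShift (C a) n
  have hmap : stepMatrix (C a) (n + 1) * (1 - Z) = (1 - C a) • (1 : Matrix _ _ R[X]) := by
    simpa only [map_mul, map_sub, map_one, RingHom.mapMatrix_apply, stepMatrix_map,
      twistedShift_map, Matrix.map_smul' _ _ _ (map_mul C),
      Matrix.map_one _ (map_zero C) (map_one C)]
      using congrArg (C : R →+* R[X]).mapMatrix (stepMatrix_mul_one_sub_twistedShift a n)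
  have hfactor : charmatrix (stepMatrix a (n + 1)) * (1 - Z)
      = (X + C (a - 1) : R[X]) • (1 : Matrix _ _ R[X]) - (X : R[X]) • Z := by
    rw [charmatrix, RingHom.mapMatrix_apply, stepMatrix_map, Matrix.sub_mul, hmap, scalar_apply,
      ← smul_eq_diagonal_mul, map_sub, map_one]
    module
  have hZ : det (1 - Z) = 1 - C a := by
    simpa using det_smul_one_sub_smul_twistedShift (C a) 1 1 n
  have hdet := congrArg det hfactor
  rw [det_mul, hZ, det_smul_one_sub_smul_twistedShift] at hdet
  rw [smul_eq_C_mul, smul_eq_C_mul, map_sub, map_one, charpoly]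
  linear_combination hdet

end CommRing

section Field

variable {K : Type*} [Field K]

theorem add_sub_one_pow_eq_mul_pow_iff {a : K} (ha : a ≠ 1) (k : ℕ) (μ : K) :
    (μ + (a - 1)) ^ k = a * μ ^ k ↔ ∃ ω, ω ^ k = a ∧ (a - 1) / (ω - 1) = μ := by
  have ha' : a - 1 ≠ 0 := sub_ne_zero.mpr ha
  constructor
  · intro h
    have hμ : μ ≠ 0 := by
      rintro rfl
      rcases eq_or_ne k 0 with rfl | hk
      · exact ha (by simpa using h.symm)
      · exact ha' (pow_eq_zero_iff hk |>.mp (by simpa [hk] using h))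
    refine ⟨(μ + (a - 1)) / μ, by rw [div_pow, h, mul_div_cancel_right₀ _ (pow_ne_zero k hμ)], ?_⟩
    rw [div_sub_one hμ, add_sub_cancel_left, div_div_eq_mul_div, mul_div_cancel_left₀ _ ha']
  · rintro ⟨ω, rfl, rfl⟩
    have hω : ω - 1 ≠ 0 := fun h => ha (by rw [sub_eq_zero.mp h, one_pow])
    rw [← mul_pow]
    congr 1
    field_simp
    ring

theorem spectrum_stepMatrix {a : K} (ha : a ≠ 1) (k : ℕ) :
    spectrum K (stepMatrix a k) = (fun ω => (a - 1) / (ω - 1)) '' {ω | ω ^ k = a} := by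
  ext μ
  have hroot := congrArg (eval μ) (charpoly_stepMatrix a k)
  simp only [eval_smul, eval_sub, eval_pow, eval_add, eval_X, eval_C, smul_eq_mul] at hroot
  rw [mem_spectrum_iff_isRoot_charpoly, IsRoot.def,
    ← mul_eq_zero_iff_left (sub_ne_zero.mpr ha.symm), hroot, sub_eq_zero, add_sub_one_pow_eq_mul_pow_iff ha]
  rfl

end Field

section Complex

open Complex

theorem Complex.setOf_pow_eq_pow {k : ℕ} (hk : k ≠ 0) (w : ℂ) :
    {ω : ℂ | ω ^ k = w ^ k} = Set.range fun l : Fin k => w * exp (2 * Real.pi * l * I / k) := by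
  ext ω
  have hroots := (isPrimitiveRoot_exp k hk).nthRoots_eq (rfl : w ^ k = w ^ k)
  have hexp : ∀ l : ℕ, exp (2 * Real.pi * I / k) ^ l = exp (2 * Real.pi * l * I / k) := by
    intro l
    rw [← exp_nat_mul]
    ring_nf
  rw [Set.mem_ofPred_eq, ← mem_nthRoots (Nat.pos_of_ne_zero hk), hroots, Multiset.mem_map]
  simp only [Multiset.mem_range, hexp, Set.mem_range, Fin.exists_iff, exists_prop, mul_comm _ w]

theorem spectrum_stepMatrix_pow {k : ℕ} (hk : k ≠ 0) {w : ℂ} (hw : w ^ k ≠ 1) :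
    spectrum ℂ (stepMatrix (w ^ k) k)
      = Set.range fun l : Fin k => (w ^ k - 1) / (w * exp (2 * Real.pi * l * I / k) - 1) := by
  rw [spectrum_stepMatrix hw, Complex.setOf_pow_eq_pow hk, ← Set.range_comp]
  rfl

theorem spectralRadius_stepMatrix_pow {k : ℕ} (hk : k ≠ 0) {w : ℝ} (hw0 : 0 ≤ w) (hw1 : w ≠ 1) :
    spectralRadius ℂ (stepMatrix ((w : ℂ) ^ k) k) = ENNReal.ofReal ((w ^ k - 1) / (w - 1)) := by
  have hwk : (w : ℂ) ^ k ≠ 1 := by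
    exact_mod_cast (pow_eq_one_iff_of_nonneg hw0 hk).not.mpr hw1
  have hr : 0 ≤ (w ^ k - 1) / (w - 1) := by
    rw [← geom_sum_eq hw1]
    positivity
  have hnorm : ∀ x : ℝ, ‖(x : ℂ) - 1‖ = |x - 1| := fun x => by
    rw [← ofReal_one, ← ofReal_sub, norm_real, Real.norm_eq_abs]
  have hdenom : ∀ z : ℂ, ‖z‖ = 1 → |w - 1| ≤ ‖(w : ℂ) * z - 1‖ := by
    intro z hz
    simpa [hz, abs_of_nonneg hw0] using abs_norm_sub_norm_le ((w : ℂ) * z) 1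
  have hbound : ∀ z : ℂ, ‖z‖ = 1 → ‖((w : ℂ) ^ k - 1) / (w * z - 1)‖ ≤ (w ^ k - 1) / (w - 1) := by
    intro z hz
    rw [← abs_of_nonneg hr, abs_div, norm_div, ← ofReal_pow, hnorm]
    exact div_le_div_of_nonneg_left (abs_nonneg _) (abs_pos.mpr (sub_ne_zero.mpr hw1))
      (hdenom z hz)
  rw [spectralRadius, spectrum_stepMatrix_pow hk hwk, iSup_range]
  apply le_antisymm
  · refine iSup_le fun l => ?_
    rw [← enorm_eq_nnnorm, ← ofReal_norm]
    exact ENNReal.ofReal_le_ofReal (hbound _ (by simp [Complex.norm_exp]))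
  · refine le_iSup_of_le ⟨0, Nat.pos_of_ne_zero hk⟩ ?_
    rw [← enorm_eq_nnnorm, ← ofReal_norm]
    refine ENNReal.ofReal_le_ofReal (le_of_eq ?_)
    simp only [Nat.cast_zero, mul_zero, zero_mul, zero_div, exp_zero, mul_one]
    rw [norm_div, ← ofReal_pow, hnorm, hnorm, ← abs_div, abs_of_nonneg hr]

end Complex

theorem stmt10_general (k : ℕ) (hk : 0 < k) (lam : ℂ)
    (h1 : ‖lam‖ ≠ 1)
    (M : Matrix (Fin k) (Fin k) ℝ)
    (hM : ∀ i j : Fin k, M i j = if i < j then (‖lam‖) ^ 2 else 1) :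
    ((1 - (‖lam‖) ^ 2) • M.charpoly
        = (X + C ((‖lam‖) ^ 2 - 1)) ^ k - ((‖lam‖) ^ 2) • X ^ k)
    ∧ (spectrum ℂ (M.map (Complex.ofReal)) = Set.range fun l : Fin k =>
        (((‖lam‖) ^ 2 - 1 : ℝ) : ℂ) /
          ((((‖lam‖) ^ ((2 : ℝ) / (k : ℝ)) : ℝ) : ℂ) *
            Complex.exp (2 * Real.pi * (l : ℕ) * Complex.I / (k : ℕ)) - 1))
    ∧ spectralRadius ℂ (M.map (Complex.ofReal))
        = ENNReal.ofReal
            (((‖lam‖) ^ 2 - 1) / ((‖lam‖) ^ ((2 : ℝ) / (k : ℝ)) - 1)) := by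
  set w := ‖lam‖ ^ ((2 : ℝ) / k)
  have hwk : w ^ k = ‖lam‖ ^ 2 := by
    rw [← Real.rpow_natCast, ← Real.rpow_mul (norm_nonneg _), div_mul_cancel₀ _ (by positivity)]
    norm_cast
  have ha1 : ‖lam‖ ^ 2 ≠ 1 := (pow_eq_one_iff_of_nonneg (norm_nonneg _) two_ne_zero).not.mpr h1
  have hw1 : w ≠ 1 := fun h => ha1 (by rw [← hwk, h, one_pow])
  have hMstep : M = stepMatrix (‖lam‖ ^ 2) k := Matrix.ext hM
  have hMC : M.map Complex.ofReal = stepMatrix ((w : ℂ) ^ k) k := by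
    rw [hMstep, ← hwk]
    exact (stepMatrix_map Complex.ofRealHom _ k).trans (by simp)
  refine ⟨by rw [hMstep]; exact charpoly_stepMatrix _ k, ?_, ?_⟩
  · rw [hMC, spectrum_stepMatrix_pow hk.ne' (by exact_mod_cast hwk.symm ▸ ha1), ← hwk]
    push_cast
    rfl
  · rw [hMC, spectralRadius_stepMatrix_pow hk.ne' (by positivity) hw1, hwk]

/-- for the `k×k` matrix `M` with entries `|λ|²` strictly above the
diagonal and `1` elsewhere, the characteristic polynomial is
`((x-1+|λ|²)^k - |λ|² x^k)/(1-|λ|²)`, the complex eigenvalues are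
`(|λ|²-1)/(|λ|^{2/k} e^{2πil/k} - 1)` for `l = 0,…,k-1`, and the spectral radius
is `(|λ|²-1)/(|λ|^{2/k}-1)`. -/
theorem stmt10 (k : ℕ) (hk : 0 < k) (lam : ℂ) (hlam : lam ≠ 0)
    (h1 : ‖lam‖ ≠ 1)
    (M : Matrix (Fin k) (Fin k) ℝ)
    (hM : ∀ i j : Fin k, M i j = if i < j then (‖lam‖) ^ 2 else 1) :
    ((1 - (‖lam‖) ^ 2) • M.charpoly
        = (X + C ((‖lam‖) ^ 2 - 1)) ^ k - ((‖lam‖) ^ 2) • X ^ k)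
    ∧ (spectrum ℂ (M.map (Complex.ofReal)) = Set.range fun l : Fin k =>
        (((‖lam‖) ^ 2 - 1 : ℝ) : ℂ) /
          ((((‖lam‖) ^ ((2 : ℝ) / (k : ℝ)) : ℝ) : ℂ) *
            Complex.exp (2 * Real.pi * (l : ℕ) * Complex.I / (k : ℕ)) - 1))
    ∧ spectralRadius ℂ (M.map (Complex.ofReal))
        = ENNReal.ofReal
            (((‖lam‖) ^ 2 - 1) / ((‖lam‖) ^ ((2 : ℝ) / (k : ℝ)) - 1)) :=
  stmt10_general k hk lam h1 M hM
end
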